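/- Let α ∈ E. If there exist a nonzero integer n and an integer m such that σ_x^n(α) − α = m (the image of the integer m in E), then α = (m/n)·x + c for some c ∈ F. -/

import Mathlib

/-!
Put `β = α - (m/n)·x` and `τ = σ_x^n`: then `τ` fixes `F` and `β`, and translates `x` by `n`.
Since `β` is algebraic over `F(x)`, there is a nonzero `p ∈ F[Y][T]` with `p(β, x) = 0`. The
coefficients of `S(T) = p(β, T) ∈ E[T]` are fixed by `τ`, so the roots of `S` are stable under `τ`
and `S` vanishes at all `x + kn`, `k ∈ ℕ`. In characteristic zero these are infinitely many points,
so `S = 0`, and any nonzero coefficient of `p` is a polynomial over `F` annihilating `β`. As `F` is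
algebraically closed, `β ∈ F`.
-/

/-- `E`, an algebraic closure of the rational function field `F(x)`. -/
noncomputable abbrev Ebar (F : Type*) [Field F] : Type _ := AlgebraicClosure (RatFunc F)

/-- The element `x` of `F(x) ⊆ E`. -/
noncomputable abbrev Ebar.x (F : Type*) [Field F] : Ebar F :=
  algebraMap (RatFunc F) (Ebar F) RatFunc.X

/-- The embedding of a constant `a ∈ F` into `E`. -/
noncomputable abbrev Ebar.c (F : Type*) [Field F] (a : F) : Ebar F :=
  algebraMap (RatFunc F) (Ebar F) (RatFunc.C a)

open Polynomial

theorem RingAut.zpow_apply_eq_self {R : Type*} [Semiring R] {σ : RingAut R} {y : R}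
    (hy : σ y = y) (k : ℤ) : (σ ^ k) y = y := by
  have := (RingAut.toPerm R σ).zpow_apply_eq_self_of_apply_eq_self hy k
  rwa [← map_zpow] at this

theorem RingAut.zpow_apply_eq_add_intCast {R : Type*} [Ring R] {σ : RingAut R} {y : R}
    (hy : σ y = y + 1) (k : ℤ) : (σ ^ k) y = y + k := by
  induction k using Int.induction_on with
  | zero => simp
  | succ k ih => rw [zpow_add_one, RingAut.mul_apply, hy, map_add, ih, map_one]; push_cast; abel
  | pred k ih =>
    have : σ⁻¹ y = y - 1 := by
      rw [RingAut.inv_apply, RingEquiv.symm_apply_eq, map_sub, hy, map_one, add_sub_cancel_right]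
    rw [zpow_sub_one, RingAut.mul_apply, this, map_sub, ih, map_one]; push_cast; abel

theorem IsAlgClosed.mem_range_algebraMap_of_isAlgebraic {k K : Type*} [Field k] [IsAlgClosed k]
    [Ring K] [IsDomain K] [Algebra k K] {x : K} (hx : IsAlgebraic k x) :
    x ∈ (algebraMap k K).range :=
  minpoly.mem_range_of_degree_eq_one k x <|
    IsAlgClosed.degree_eq_one_of_irreducible k (minpoly.irreducible hx.isIntegral)

theorem Polynomial.aevalAeval_eq_eval_map {R A : Type*} [CommSemiring R] [CommSemiring A]
    [Algebra R A] (x y : A) (q : R[X][X]) :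
    aevalAeval x y q = (q.map (aeval x).toRingHom).eval y := by
  induction q using Polynomial.induction_on' with
  | add => simp_all
  | monomial n a => simp [← C_mul_X_pow_eq_monomial]

theorem Polynomial.aeval_eq_aevalAeval {R A : Type*} [CommSemiring R] [CommSemiring A]
    [Algebra R A] [Algebra R[X] A] [IsScalarTower R R[X] A] (y : A) (q : R[X][X]) :
    aeval y q = aevalAeval (algebraMap R[X] A X) y q := by
  induction q using Polynomial.induction_on' with
  | add => simp_all
  | monomial n a =>
    have := aeval_algHom_apply (IsScalarTower.toAlgHom R R[X] A) X a
    simp only [IsScalarTower.coe_toAlgHom', aeval_X_left_apply] at this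
    simp [← C_mul_X_pow_eq_monomial, this]

theorem Polynomial.eq_zero_of_forall_isRoot_add_mul {K : Type*} [CommRing K] [IsDomain K]
    [CharZero K] {p : K[X]} {t c : K} (hc : c ≠ 0) (h : ∀ k : ℕ, p.IsRoot (t + k * c)) :
    p = 0 := by
  refine p.eq_zero_of_infinite_isRoot (Set.infinite_of_injective_forall_mem ?_ h)
  intro k l hkl
  exact_mod_cast mul_right_cancel₀ hc (add_left_cancel hkl)

theorem isAlgebraic_of_aevalAeval_eq_zero_of_shift {F E : Type*} [Field F] [CharZero F]
    [Field E] [Algebra F E] (τ : E →ₐ[F] E) {t β : E} {c : F} (hc : c ≠ 0)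
    (hτt : τ t = t + algebraMap F E c) (hτβ : τ β = β)
    {p : F[X][X]} (hp : p ≠ 0) (hpβt : aevalAeval β t p = 0) : IsAlgebraic F β := by
  have : CharZero E := charZero_of_injective_algebraMap (algebraMap F E).injective
  set S : E[X] := p.map (aeval β).toRingHom
  have hSt : S.IsRoot t := by rw [IsRoot, ← aevalAeval_eq_eval_map, hpβt]
  have hSτ : S.map τ.toRingHom = S := by
    rw [Polynomial.map_map]
    congr 1
    ext
    · simp
    · simpa using hτβ
  have hS : S = 0 := by
    refine eq_zero_of_forall_isRoot_add_mul (t := t)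
      ((map_ne_zero_iff _ (algebraMap F E).injective).2 hc) fun k ↦ ?_
    induction k with
    | zero => simpa using hSt
    | succ k ih =>
      have := ih.map (f := τ.toRingHom)
      rw [hSτ] at this
      convert this using 1
      simp only [AlgHom.toRingHom_eq_coe, RingHom.coe_coe, map_add, map_mul, map_natCast,
        AlgHom.commutes, hτt]
      push_cast
      ring
  obtain ⟨i, hi⟩ : ∃ i, p.coeff i ≠ 0 := by simpa [Polynomial.ext_iff] using hp
  exact ⟨p.coeff i, hi, by simpa [S] using congr(coeff $hS i)⟩

/-- Let `F` be an algebraically closed field of characteristic zero, `E` the algebraic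
closure of `F(x)`, and `σ_x` an automorphism of `E` fixing `F` with `σ_x(x) = x + 1`.
If `α ∈ E` satisfies `σ_x^n(α) - α = m` for some nonzero integer `n` and some integer
`m`, then `α = (m/n)·x + c` for some `c ∈ F`. -/
theorem integer_linear_of_shift_difference_int
    (F : Type*) [Field F] [IsAlgClosed F] [CharZero F]
    (σx : Ebar F ≃+* Ebar F)
    (hσxF : ∀ a : F, σx (Ebar.c F a) = Ebar.c F a)
    (hσxx : σx (Ebar.x F) = Ebar.x F + 1)
    (α : Ebar F) (n : ℤ) (hn : n ≠ 0) (m : ℤ)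
    (h : (σx ^ n) α - α = (m : Ebar F)) :
    ∃ c : F, α = ((m : Ebar F) / (n : Ebar F)) * Ebar.x F + Ebar.c F c := by
  have hconst : ∀ a : F, Ebar.c F a = algebraMap F (Ebar F) a := fun a ↦ by
    rw [Ebar.c, ← RatFunc.algebraMap_eq_C, ← IsScalarTower.algebraMap_apply]
  let τ : Ebar F ≃ₐ[F] Ebar F := AlgEquiv.ofRingEquiv (f := σx ^ n) fun a ↦ by
    rw [← hconst]; exact RingAut.zpow_apply_eq_self (hσxF a) n
  have hτx : τ (Ebar.x F) = Ebar.x F + algebraMap F (Ebar F) n := by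
    rw [map_intCast]; exact RingAut.zpow_apply_eq_add_intCast hσxx n
  set β := α - ((m : Ebar F) / (n : Ebar F)) * Ebar.x F with hβ
  have hτβ : τ β = β := by
    have hτα : τ α = α + m := eq_add_of_sub_eq' h
    have hn' : (n : Ebar F) ≠ 0 := Int.cast_ne_zero.2 hn
    rw [hβ, map_sub, map_mul, hτα, hτx, map_div₀, map_intCast, map_intCast, map_intCast]
    field_simp
    ring
  obtain ⟨q, hq, hqβ⟩ := (IsFractionRing.isAlgebraic_iff F[X] (RatFunc F) (Ebar F)).mpr
    (Algebra.IsAlgebraic.isAlgebraic β)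
  have hx : algebraMap F[X] (Ebar F) X = Ebar.x F := by
    rw [IsScalarTower.algebraMap_apply F[X] (RatFunc F), RatFunc.algebraMap_X]
  have hβx : aevalAeval β (Ebar.x F) (Bivariate.swap q) = 0 := by
    rw [Bivariate.aevalAeval_swap, ← hx, ← aeval_eq_aevalAeval, hqβ]
  obtain ⟨c, hβc⟩ := IsAlgClosed.mem_range_algebraMap_of_isAlgebraic <|
    isAlgebraic_of_aevalAeval_eq_zero_of_shift τ.toAlgHom (Int.cast_ne_zero.2 hn) hτx hτβ
      (by simpa using hq) hβx
  exact ⟨c, by rw [hconst, hβc]; ring⟩
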